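/- Fix h > 0 and the uniform grid x_ν = νh with cells I_ν = [x_ν − h/2, x_ν + h/2). Let w : ℝ → ℝ be the piecewise-linear function given on each cell by w(x) = v̄_ν + v'_ν·(x − x_ν)/h for x ∈ I_ν, where (v̄_ν) and (v'_ν) are given real sequences. Then the exact average of w over the staggered cell [x_ν, x_{ν+1}] is (1/h)∫_{x_ν}^{x_{ν+1}} w(x) dx = (v̄_ν + v̄_{ν+1})/2 + (v'_ν − v'_{ν+1})/8. -/

import Mathlib

open MeasureTheory intervalIntegral

/-- The piecewise-linear function with cell averages `v̄_ν` and scaled slopes `v'_ν`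
on the uniform grid `x_ν = νh`, cells `I_ν = [x_ν − h/2, x_ν + h/2)`:
for `x ∈ I_ν` (i.e. `ν = ⌊x/h + 1/2⌋`), `w(x) = v̄_ν + v'_ν·(x − x_ν)/h`. -/
noncomputable def piecewiseLinear (h : ℝ) (v d : ℤ → ℝ) (x : ℝ) : ℝ :=
  let ν : ℤ := ⌊x / h + 1 / 2⌋
  v ν + d ν * (x - ν * h) / h

open Set

/-! The staggered cell `[x_ν, x_{ν+1}]` is split at the interface `x_ν + h/2` into two halves,
on each of which `w` is affine (up to one endpoint). The midpoint rule is exact for affine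
functions, so the halves contribute `h/2 · w(x_ν + h/4)` and `h/2 · w(x_{ν+1} − h/4)`. -/

theorem intervalIntegral.integral_affine (c k x₀ a b : ℝ) :
    ∫ x in a..b, (c + k * (x - x₀)) = (b - a) * (c + k * ((a + b) / 2 - x₀)) := by
  rw [integral_add intervalIntegrable_const (Continuous.intervalIntegrable (by fun_prop) _ _),
    intervalIntegral.integral_const_mul, integral_comp_sub_right (fun x => x), integral_id,
    integral_const, smul_eq_mul]
  ring

namespace piecewiseLinear

variable {h : ℝ} {ν : ℤ}

theorem floor_eq_of_mem_Ico {x : ℝ} (hh : 0 < h) (hx : x ∈ Ico (ν * h - h / 2) (ν * h + h / 2)) :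
    ⌊x / h + 1 / 2⌋ = ν := by
  rw [Int.floor_eq_iff, ← sub_le_iff_le_add, ← lt_sub_iff_add_lt, le_div_iff₀ hh,
    div_lt_iff₀ hh]
  constructor <;> linarith [hx.1, hx.2]

variable {a b : ℝ} (hh : 0 < h) (v d : ℤ → ℝ) (hab : a ≤ b)
  (ha : ν * h - h / 2 ≤ a) (hb : b ≤ ν * h + h / 2)
include hh hab ha hb

theorem eqOn_uIoo :
    EqOn (piecewiseLinear h v d) (fun x => v ν + d ν / h * (x - ν * h)) (uIoo a b) := by
  intro x hx
  rw [uIoo_of_le hab] at hx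
  rw [piecewiseLinear, floor_eq_of_mem_Ico (ν := ν) hh ⟨by linarith [hx.1], by linarith [hx.2]⟩,
    mul_div_right_comm]

theorem intervalIntegrable : IntervalIntegrable (piecewiseLinear h v d) volume a b :=
  (Continuous.intervalIntegrable (by fun_prop) a b).congr_uIoo (eqOn_uIoo hh v d hab ha hb).symm

theorem integral_eq_length_mul_midpoint :
    ∫ x in a..b, piecewiseLinear h v d x = (b - a) * (v ν + d ν / h * ((a + b) / 2 - ν * h)) := by
  rw [integral_congr_uIoo (eqOn_uIoo hh v d hab ha hb), integral_affine]

end piecewiseLinear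

/-- The exact staggered cell average of a piecewise-linear reconstruction:
`(1/h)∫_{x_ν}^{x_{ν+1}} w = (v̄_ν + v̄_{ν+1})/2 + (v'_ν − v'_{ν+1})/8`. -/
theorem staggered_average_of_piecewise_linear
    (h : ℝ) (hh : 0 < h) (v d : ℤ → ℝ) (ν : ℤ) :
    (1 / h) * ∫ x in (ν * h)..((ν + 1 : ℤ) * h), piecewiseLinear h v d x
      = (v ν + v (ν + 1)) / 2 + (d ν - d (ν + 1)) / 8 := by
  have left_half : (ν : ℝ) * h ≤ ν * h + h / 2 := by linarith
  have right_half : (ν : ℝ) * h + h / 2 ≤ ((ν + 1 : ℤ) : ℝ) * h := by push_cast; linarith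
  have left_cell_lo : (ν : ℝ) * h - h / 2 ≤ ν * h := by linarith
  have right_cell_lo : ((ν + 1 : ℤ) : ℝ) * h - h / 2 ≤ ν * h + h / 2 := by push_cast; linarith
  have right_cell_hi : ((ν + 1 : ℤ) : ℝ) * h ≤ ((ν + 1 : ℤ) : ℝ) * h + h / 2 := by linarith
  rw [← integral_add_adjacent_intervals
      (piecewiseLinear.intervalIntegrable hh v d left_half left_cell_lo le_rfl)
      (piecewiseLinear.intervalIntegrable hh v d right_half right_cell_lo right_cell_hi),
    piecewiseLinear.integral_eq_length_mul_midpoint hh v d left_half left_cell_lo le_rfl,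
    piecewiseLinear.integral_eq_length_mul_midpoint hh v d right_half right_cell_lo right_cell_hi]
  push_cast
  field_simp
  ring
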